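/- arXiv:2108.09735 — 3 statements merged into one kernel-verified Lean document; each statement's English description precedes it below -/
import Mathlib

section
/- Let K be a field, > a local degree ordering on K[x_1,...,x_n], and I an ideal with dim_K K[x]_⟨x⟩/I < ∞ and highest corner m = HC(I). If G = {g_1,...,g_s} is a minimal standard basis of I with respect to >, then deg(LM(g_i)) ≤ deg(m) + 1 for all i. -/
open MvPolynomial

/-- A local monomial ordering on monomials in `n` variables: a multiplicatively
compatible strict total order with `1 > x_i` for all `i`. -/
structure LocalMonomialOrder (n : ℕ) where
  lt : (Fin n →₀ ℕ) → (Fin n →₀ ℕ) → Prop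
  irrefl : ∀ a, ¬ lt a a
  trans : ∀ {a b c}, lt a b → lt b c → lt a c
  total : ∀ a b, a ≠ b → lt a b ∨ lt b a
  add_right : ∀ {a b} (c), lt a b → lt (a + c) (b + c)
  lt_one : ∀ i, lt (Finsupp.single i 1) 0

variable {K : Type*} [Field K] {n : ℕ}

/-- `m` is the leading monomial (w.r.t. `o`) of `f`. -/
def IsLeadMonomial (o : LocalMonomialOrder n) (f : MvPolynomial (Fin n) K)
    (m : Fin n →₀ ℕ) : Prop :=
  m ∈ f.support ∧ ∀ m' ∈ f.support, m' ≠ m → o.lt m' m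

/-- The leading ideal `L(I)`. -/
noncomputable def leadingIdeal (o : LocalMonomialOrder n) (I : Ideal (MvPolynomial (Fin n) K)) :
    Ideal (MvPolynomial (Fin n) K) :=
  Ideal.span {p | ∃ f ∈ I, f ≠ 0 ∧ ∃ m, IsLeadMonomial o f m ∧ p = monomial m (1 : K)}

/-- `m` is a highest corner of `I`. -/
def IsHighestCorner (o : LocalMonomialOrder n) (I : Ideal (MvPolynomial (Fin n) K))
    (m : Fin n →₀ ℕ) : Prop :=
  monomial m (1 : K) ∉ leadingIdeal o I ∧
    ∀ m', o.lt m' m → monomial m' (1 : K) ∈ leadingIdeal o I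

/-- total degree of a monomial -/
def mdeg (m : Fin n →₀ ℕ) : ℕ := m.sum fun _ e => e

/-- a local degree ordering refines the negative total degree -/
def LocalMonomialOrder.IsDegreeOrder (o : LocalMonomialOrder n) : Prop :=
  ∀ a b : Fin n →₀ ℕ, mdeg b < mdeg a → o.lt a b

/-- the maximal ideal generated by the variables -/
noncomputable abbrev mxId (K : Type*) [Field K] (n : ℕ) : Ideal (MvPolynomial (Fin n) K) :=
  Ideal.span (Set.range X)

theorem mxId_eq_ker (K : Type*) [Field K] (n : ℕ) :
    mxId K n = RingHom.ker (constantCoeff (σ := Fin n) (R := K)) := by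
  ext x
  show x ∈ Ideal.span (Set.range (X : Fin n → MvPolynomial (Fin n) K)) ↔ _
  rw [← Set.image_univ, mem_ideal_span_X_image]
  simp only [RingHom.mem_ker, constantCoeff_eq, Set.mem_univ, true_and]
  constructor
  · intro h
    by_contra hc
    obtain ⟨i, hi⟩ := h 0 (by simpa [mem_support_iff] using hc)
    simp at hi
  · intro h m hm
    by_contra hc
    push_neg at hc
    have : m = 0 := by ext i; simpa using hc i
    rw [mem_support_iff] at hm
    exact hm (this ▸ h)

instance (K : Type*) [Field K] (n : ℕ) : (mxId K n).IsPrime :=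
  mxId_eq_ker K n ▸ RingHom.ker_isPrime _

/-- the localization `K[x]_⟨x⟩` -/
abbrev LocX (K : Type*) [Field K] (n : ℕ) := Localization.AtPrime (mxId K n)

/-- the leading monomials of a minimal standard basis of a
zero-dimensional ideal `I` have degree at most `deg (HC I) + 1`. -/
theorem minimal_standardBasis_deg_le {K : Type*} [Field K] {n : ℕ}
    (o : LocalMonomialOrder n) (ho : o.IsDegreeOrder)
    (I : Ideal (MvPolynomial (Fin n) K))
    (hfin : FiniteDimensional K
      (LocX K n ⧸ I.map (algebraMap (MvPolynomial (Fin n) K) (LocX K n))))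
    (m : Fin n →₀ ℕ) (hm : IsHighestCorner o I m)
    (s : ℕ) (g : Fin s → MvPolynomial (Fin n) K) (lm : Fin s → (Fin n →₀ ℕ))
    -- `g` is a standard basis of `I` with leading monomials `lm`:
    (hgI : ∀ i, g i ∈ I)
    (hlm : ∀ i, IsLeadMonomial o (g i) (lm i))
    (hgen : leadingIdeal o I =
      Ideal.span (Set.range fun i => monomial (lm i) (1 : K)))
    -- minimality: no leading monomial divides another one:
    (hmin : ∀ i j : Fin s, i ≠ j → ¬ lm i ≤ lm j) :
    ∀ i, mdeg (lm i) ≤ mdeg m + 1 := by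
  intro i
  by_contra hdeg
  push_neg at hdeg
  -- `lm i` is nonzero, pick a variable `j` in its support
  have hne : lm i ≠ 0 := by
    intro h0
    rw [h0] at hdeg
    simp [mdeg] at hdeg
  obtain ⟨j, hj⟩ := Finsupp.support_nonempty_iff.mpr hne
  have hj' : 1 ≤ lm i j := Nat.one_le_iff_ne_zero.mpr (Finsupp.mem_support_iff.mp hj)
  set μ : Fin n →₀ ℕ := lm i - Finsupp.single j 1 with hμ
  have hsum : μ + Finsupp.single j 1 = lm i := by
    ext k
    simp only [Finsupp.add_apply, hμ, Finsupp.tsub_apply, Finsupp.single_apply]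
    by_cases hk : j = k
    · subst hk; simp; omega
    · simp [hk]
  have hμdeg : mdeg μ + 1 = mdeg (lm i) := by
    have h1 : mdeg (μ + Finsupp.single j 1) = mdeg μ + mdeg (Finsupp.single j 1) :=
      Finsupp.sum_add_index' (fun _ => rfl) (fun _ _ _ => rfl)
    rw [hsum] at h1
    have h2 : mdeg (Finsupp.single j (1 : ℕ)) = 1 := by
      simp [mdeg, Finsupp.sum_single_index]
    omega
  -- `μ` has degree > `mdeg m`, so `o.lt μ m`, hence `monomial μ 1 ∈ L(I)`
  have hlt : o.lt μ m := ho μ m (by omega)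
  have hmem : monomial μ (1 : K) ∈ leadingIdeal o I := hm.2 μ hlt
  have hrange : (Set.range fun i => monomial (lm i) (1 : K))
      = (fun s => monomial s (1 : K)) '' Set.range lm := by
    ext p; simp
  rw [hgen, hrange] at hmem
  obtain ⟨si, hsi, hsile⟩ := mem_ideal_span_monomial_image.mp hmem μ
    (by simp [mem_support_iff, coeff_monomial])
  obtain ⟨k, rfl⟩ := hsi
  have hμle : μ ≤ lm i := le_iff_exists_add.mpr ⟨Finsupp.single j 1, hsum.symm⟩
  have hki : k ≠ i := by
    rintro rfl
    have h1 : mdeg (lm k) ≤ mdeg μ := by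
      obtain ⟨c, hc⟩ := le_iff_exists_add.mp hsile
      have : mdeg μ = mdeg (lm k) + mdeg c := by
        rw [hc]; exact Finsupp.sum_add_index' (fun _ => rfl) (fun _ _ _ => rfl)
      omega
    omega
  exact hmin k i hki (le_trans hsile hμle)
end

section
/- Let K be a field, > a local monomial ordering on K[x_1,...,x_n], and I an ideal of K[x_1,...,x_n] such that dim_K K[x]_⟨x⟩ / I·K[x]_⟨x⟩ < ∞. Then every monomial strictly smaller (w.r.t. >) than the highest corner HC(I) lies in the ideal I·K[x]_⟨x⟩. -/
open MvPolynomial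

variable {K : Type*} [Field K] {n : ℕ}

/-- a monomial of degree `d` lies in the `d`-th power of the maximal ideal -/
theorem monomial_mem_mxId_pow {K : Type*} [Field K] {n : ℕ} (μ : Fin n →₀ ℕ) :
    monomial μ (1 : K) ∈ mxId K n ^ (mdeg μ) := by
  induction μ using Finsupp.induction with
  | zero => simp [mdeg]
  | single_add i b μ hi hb ih =>
    have hdeg : mdeg (Finsupp.single i b + μ) = b + mdeg μ := by
      unfold mdeg
      rw [Finsupp.sum_add_index (by simp) (by simp), Finsupp.sum_single_index rfl]
    have hmon : monomial (Finsupp.single i b + μ) (1 : K)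
        = (X i) ^ b * monomial μ (1 : K) := by
      rw [X_pow_eq_monomial, monomial_mul, one_mul]
    rw [hdeg, hmon, pow_add]
    exact Ideal.mul_mem_mul
      (Ideal.pow_mem_pow (Ideal.subset_span (Set.mem_range_self i)) b) ih

set_option maxHeartbeats 1000000 in
set_option synthInstance.maxHeartbeats 400000 in
/-- every monomial strictly smaller than the highest corner of a
zero-dimensional ideal `I` lies in `I·K[x]_⟨x⟩`. -/
theorem monomial_lt_highestCorner_mem {K : Type*} [Field K] {n : ℕ}
    (o : LocalMonomialOrder n)
    (I : Ideal (MvPolynomial (Fin n) K))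
    (hfin : FiniteDimensional K
      (LocX K n ⧸ I.map (algebraMap (MvPolynomial (Fin n) K) (LocX K n))))
    (m : Fin n →₀ ℕ) (hm : IsHighestCorner o I m)
    (m' : Fin n →₀ ℕ) (hlt : o.lt m' m) :
    algebraMap (MvPolynomial (Fin n) K) (LocX K n) (monomial m' (1 : K)) ∈
      I.map (algebraMap (MvPolynomial (Fin n) K) (LocX K n)) := by
  
  classical
  haveI := hfin
  set φ := algebraMap (MvPolynomial (Fin n) K) (LocX K n) with hφ
  set J := I.map φ with hJ
  -- the quotient is an Artinian ring
  haveI hart : IsArtinianRing (LocX K n ⧸ J) := isArtinian_of_tower K inferInstance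
  obtain ⟨k, hk⟩ := IsArtinianRing.isNilpotent_jacobson_bot (R := LocX K n ⧸ J)
  set π := Ideal.Quotient.mk J with hπ
  -- images of the variables lie in the Jacobson radical of the quotient
  have hX : ∀ i : Fin n, π (φ (X i)) ∈ Ideal.jacobson (⊥ : Ideal (LocX K n ⧸ J)) := by
    intro i
    refine (Ideal.mem_jacobson_bot (R := LocX K n ⧸ J)).mpr ?_
    intro y
    obtain ⟨z, rfl⟩ := Ideal.Quotient.mk_surjective y
    have hmem : φ (X i) * z ∈ IsLocalRing.maximalIdeal (LocX K n) := by
      apply Ideal.mul_mem_right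
      exact (IsLocalization.AtPrime.to_map_mem_maximal_iff (LocX K n) (mxId K n)
        (X i)).mpr (Ideal.subset_span (Set.mem_range_self i))
    have hunit : IsUnit (φ (X i) * z + 1) := by
      by_contra h
      have h1 : φ (X i) * z + 1 ∈ IsLocalRing.maximalIdeal (LocX K n) :=
        (IsLocalRing.mem_maximalIdeal _).mpr h
      have h2 : (1 : LocX K n) ∈ IsLocalRing.maximalIdeal (LocX K n) := by
        have := Ideal.sub_mem _ h1 hmem
        simpa using this
      exact (IsLocalRing.maximalIdeal.isMaximal (LocX K n)).ne_top
        ((Ideal.eq_top_iff_one _).mpr h2)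
    have : π (φ (X i)) * π z + 1 = π (φ (X i) * z + 1) := by
      simp [map_add, map_mul]
    rw [this]
    exact hunit.map π
  -- monomials of degree ≥ k belong to J
  have hbig : ∀ μ : Fin n →₀ ℕ, k ≤ mdeg μ → φ (monomial μ (1 : K)) ∈ J := by
    intro μ hμ
    have h1 : monomial μ (1 : K) ∈ mxId K n ^ k :=
      Ideal.pow_le_pow_right hμ (monomial_mem_mxId_pow μ)
    have h2 : (π.comp φ) (monomial μ (1 : K))
        ∈ Ideal.map (π.comp φ) (mxId K n ^ k) := Ideal.mem_map_of_mem _ h1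
    rw [show Ideal.map (π.comp φ) (mxId K n ^ k) = Ideal.map (π.comp φ) (mxId K n) ^ k from
      Ideal.map_pow (R := MvPolynomial (Fin n) K) (S := LocX K n ⧸ J) (π.comp φ) (mxId K n) k] at h2
    have h3 : Ideal.map (π.comp φ) (mxId K n)
        ≤ Ideal.jacobson (⊥ : Ideal (LocX K n ⧸ J)) := by
      rw [Ideal.map_le_iff_le_comap, Ideal.span_le]
      rintro _ ⟨i, rfl⟩
      exact hX i
    have h4 := Ideal.pow_right_mono h3 k h2
    rw [hk] at h4
    have h5 : π (φ (monomial μ (1 : K))) = 0 := by simpa using h4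
    exact (Ideal.Quotient.eq_zero_iff_mem).mp h5
  -- rewrite the leading ideal as a span of a monomial image
  have hLI : leadingIdeal o I = Ideal.span ((fun s => monomial s (1 : K)) ''
      {γ | ∃ f ∈ I, f ≠ 0 ∧ IsLeadMonomial o f γ}) := by
    unfold leadingIdeal
    congr 1
    ext p
    constructor
    · rintro ⟨f, hfI, hf0, γ, hγ, rfl⟩
      exact ⟨γ, ⟨f, hfI, hf0, hγ⟩, rfl⟩
    · rintro ⟨γ, ⟨f, hfI, hf0, hγ⟩, rfl⟩
      exact ⟨f, hfI, hf0, γ, hγ, rfl⟩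
  -- the finite set of monomials of degree < k
  have hfinS : {ν : Fin n →₀ ℕ | mdeg ν < k}.Finite := by
    have hsub : {ν : Fin n →₀ ℕ | mdeg ν < k} ⊆
        ⇑Finsupp.equivFunOnFinite ⁻¹' (Set.univ.pi fun _ : Fin n => Set.Iic k) := by
      intro ν hν
      intro i _
      simp only [Set.mem_Iic]
      have hle : ν i ≤ mdeg ν := by
        by_cases hi : i ∈ ν.support
        · exact Finset.single_le_sum (fun _ _ => Nat.zero_le _) hi
        · simp [Finsupp.notMem_support_iff.mp hi]
      exact le_of_lt (lt_of_le_of_lt hle hν)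
    exact Set.Finite.subset
      ((Set.Finite.pi fun _ => Set.finite_Iic k).preimage
        (Equiv.injective _).injOn) hsub
  set S : Finset (Fin n →₀ ℕ) := hfinS.toFinset with hS
  -- main induction
  have key : ∀ N : ℕ, ∀ μ : Fin n →₀ ℕ, o.lt μ m →
      (S.filter (fun ν => o.lt ν μ)).card < N → φ (monomial μ (1 : K)) ∈ J := by
    intro N
    induction N with
    | zero => intro μ _ h; exact absurd h (Nat.not_lt_zero _)
    | succ N ih =>
      intro μ hμm hcard
      by_cases hdeg : k ≤ mdeg μ
      · exact hbig μ hdeg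
      push_neg at hdeg
      have hμS : μ ∈ S := hfinS.mem_toFinset.mpr hdeg
      have hμL : monomial μ (1 : K) ∈ leadingIdeal o I := hm.2 μ hμm
      rw [hLI, mem_ideal_span_monomial_image] at hμL
      obtain ⟨γ, ⟨f, hfI, hf0, hγlead⟩, hγμ⟩ := hμL μ (by simp)
      set β := μ - γ with hβdef
      have hβγ : β + γ = μ := tsub_add_cancel_of_le hγμ
      set c := coeff γ f with hc
      have hc0 : c ≠ 0 := mem_support_iff.mp hγlead.1
      have hgI : monomial β c⁻¹ * f ∈ I := I.mul_mem_left _ hfI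
      have hexp : monomial β c⁻¹ * f = monomial μ (1 : K) +
          ∑ δ ∈ f.support.erase γ, monomial (β + δ) (c⁻¹ * coeff δ f) := by
        conv_lhs => rw [f.as_sum]
        rw [Finset.mul_sum, ← Finset.add_sum_erase _ _ hγlead.1]
        congr 1
        · rw [monomial_mul, hβγ, ← hc, inv_mul_cancel₀ hc0]
        · exact Finset.sum_congr rfl fun δ _ => by rw [monomial_mul]
      have hrew : φ (monomial μ (1 : K)) = φ (monomial β c⁻¹ * f) -
          ∑ δ ∈ f.support.erase γ, φ (monomial (β + δ) (c⁻¹ * coeff δ f)) := by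
        rw [hexp, map_add, map_sum]
        ring
      rw [hrew]
      apply Ideal.sub_mem
      · exact Ideal.mem_map_of_mem φ hgI
      · apply Ideal.sum_mem
        intro δ hδ
        have hCmul : monomial (β + δ) (c⁻¹ * coeff δ f)
            = C (c⁻¹ * coeff δ f) * monomial (β + δ) (1 : K) := by
          rw [C_mul_monomial, mul_one]
        rw [hCmul, map_mul]
        apply Ideal.mul_mem_left
        have hδγ : o.lt δ γ :=
          hγlead.2 δ (Finset.mem_of_mem_erase hδ) (Finset.ne_of_mem_erase hδ)
        have hlt1 : o.lt (β + δ) μ := by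
          have h := o.add_right β hδγ
          rwa [add_comm δ β, add_comm γ β, hβγ] at h
        have hltm : o.lt (β + δ) m := o.trans hlt1 hμm
        by_cases hd2 : k ≤ mdeg (β + δ)
        · exact hbig _ hd2
        · push_neg at hd2
          have hmemS : (β + δ) ∈ S := hfinS.mem_toFinset.mpr hd2
          apply ih _ hltm
          have hsub : S.filter (fun ν => o.lt ν (β + δ)) ⊂
              S.filter (fun ν => o.lt ν μ) := by
            constructor
            · intro ν hν
              rw [Finset.mem_filter] at *
              exact ⟨hν.1, o.trans hν.2 hlt1⟩
            · intro hcontra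
              have h2 : (β + δ) ∈ S.filter (fun ν => o.lt ν (β + δ)) :=
                hcontra (Finset.mem_filter.mpr ⟨hmemS, hlt1⟩)
              exact o.irrefl _ (Finset.mem_filter.mp h2).2
          have := Finset.card_lt_card hsub
          omega
  exact key ((S.filter (fun ν => o.lt ν m')).card + 1) m' hlt (Nat.lt_succ_self _)
end

section
/- Let A be a Noetherian integral domain with infinitely many prime ideals and a ∈ A a nonzero element. Then the open set U = Spec A \ V(a) is infinite. -/
open Ideal

universe u

section ArtinianAux

variable {B : Type u} [CommRing B] [IsNoetherianRing B]

/-- A finitely generated module over a Noetherian ring which is killed by a power of a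
maximal ideal is Artinian. -/
private lemma isArtinian_of_pow_smul_top_eq_bot
    (m : Ideal B) [m.IsMaximal] :
    ∀ (k : ℕ) (M : Type u) [AddCommGroup M] [Module B M] [Module.Finite B M],
      m ^ k • (⊤ : Submodule B M) = ⊥ → IsArtinian B M := by
  intro k
  induction k with
  | zero =>
    intro M _ _ _ h
    rw [pow_zero, Ideal.one_eq_top, Submodule.top_smul] at h
    have hall : ∀ y : M, y = 0 := by
      intro y
      have : y ∈ (⊥ : Submodule B M) := h ▸ Submodule.mem_top
      simpa using this
    haveI : Subsingleton M := ⟨fun a b => by rw [hall a, hall b]⟩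
    exact isArtinian_of_finite
  | succ k ih =>
    intro M _ _ _ h
    have hNoeth : IsNoetherian B M := isNoetherian_of_isNoetherianRing_of_finite B M
    have hNfg : (m • ⊤ : Submodule B M).FG := IsNoetherian.noetherian _
    haveI : Module.Finite B (m • ⊤ : Submodule B M) := Module.Finite.iff_fg.mpr hNfg
    have hsub : m ^ k • (⊤ : Submodule B (m • ⊤ : Submodule B M)) = ⊥ := by
      apply Submodule.map_injective_of_injective
        ((m • ⊤ : Submodule B M).injective_subtype)
      rw [Submodule.map_smul'', Submodule.map_top, Submodule.range_subtype, Submodule.map_bot,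
        ← Submodule.smul_assoc, smul_eq_mul, ← pow_succ, h]
    have hNart : IsArtinian B (m • ⊤ : Submodule B M) := ih _ hsub
    -- M ⧸ m•⊤ is a f.d. vector space over B ⧸ m, hence Artinian
    letI : Module (B ⧸ m) (M ⧸ (m • ⊤ : Submodule B M)) :=
      (Module.isTorsionBySet_quotient_ideal_smul M m).module
    haveI : IsScalarTower B (B ⧸ m) (M ⧸ (m • ⊤ : Submodule B M)) := by
      refine ⟨fun b d y => ?_⟩
      obtain ⟨c, rfl⟩ := Ideal.Quotient.mk_surjective d
      have h1 : b • Ideal.Quotient.mk m c = Ideal.Quotient.mk m (b * c) := rfl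
      have h2 : ∀ (s : B) (y : M ⧸ (m • ⊤ : Submodule B M)),
          (Ideal.Quotient.mk m s) • y = s • y := by
        intro s y
        obtain ⟨w, rfl⟩ := Submodule.Quotient.mk_surjective _ y
        rfl
      rw [h1, h2, h2, mul_smul]
    haveI : Module.Finite B (M ⧸ (m • ⊤ : Submodule B M)) := Module.Finite.quotient B _
    haveI : Module.Finite (B ⧸ m) (M ⧸ (m • ⊤ : Submodule B M)) :=
      Module.Finite.of_restrictScalars_finite B (B ⧸ m) _
    haveI : IsArtinianRing (B ⧸ m) := by
      letI := Ideal.Quotient.field m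
      exact DivisionRing.instIsArtinianRing
    haveI : IsArtinian (B ⧸ m) (M ⧸ (m • ⊤ : Submodule B M)) := isArtinian_of_fg_of_artinian'
    have hmk_smul : ∀ (s : B) (y : M ⧸ (m • ⊤ : Submodule B M)),
        (Ideal.Quotient.mk m s) • y = s • y := by
      intro s y
      obtain ⟨w, rfl⟩ := Submodule.Quotient.mk_surjective _ y
      rfl
    have hQart : IsArtinian B (M ⧸ (m • ⊤ : Submodule B M)) := by
      set G : Submodule B (M ⧸ (m • ⊤ : Submodule B M)) →
          Submodule (B ⧸ m) (M ⧸ (m • ⊤ : Submodule B M)) := fun S =>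
        { carrier := S
          add_mem' := fun hx hy => S.add_mem hx hy
          zero_mem' := S.zero_mem
          smul_mem' := by
            intro c y hy
            obtain ⟨b, rfl⟩ := Ideal.Quotient.mk_surjective c
            rw [hmk_smul]
            exact S.smul_mem b hy } with hG
      have hGlt : ∀ S T : Submodule B (M ⧸ (m • ⊤ : Submodule B M)), S < T → G S < G T := by
        intro S T hST
        rw [SetLike.lt_iff_le_and_exists] at hST ⊢
        obtain ⟨hle, z, hzT, hzS⟩ := hST
        exact ⟨fun y hy => hle hy, z, hzT, hzS⟩
      rw [isArtinian_iff]
      have hwf : WellFounded (· < · : Submodule (B ⧸ m) (M ⧸ (m • ⊤ : Submodule B M)) →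
          Submodule (B ⧸ m) (M ⧸ (m • ⊤ : Submodule B M)) → Prop) :=
        (isArtinian_iff _ _).mp inferInstance
      exact Subrelation.wf (fun {S T} h => hGlt S T h) (InvImage.wf G hwf)
    exact (isArtinian_iff_submodule_quotient (m • ⊤ : Submodule B M)).mpr ⟨hNart, hQart⟩

private lemma isArtinianRing_quotient_of_pow_le
    {m I : Ideal B} [m.IsMaximal] {k : ℕ} (h : m ^ k ≤ I) :
    IsArtinianRing (B ⧸ I) := by
  have hsmul : m ^ k • (⊤ : Submodule B (B ⧸ I)) = ⊥ := by
    rw [eq_bot_iff]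
    refine Submodule.smul_le.mpr fun r hr n _ => ?_
    obtain ⟨b, rfl⟩ := Ideal.Quotient.mk_surjective n
    have h1 : r • (Ideal.Quotient.mk I b) = Ideal.Quotient.mk I (r * b) := rfl
    rw [h1]
    simp only [Submodule.mem_bot]
    rw [Ideal.Quotient.eq_zero_iff_mem]
    exact I.mul_mem_right b (h hr)
  have : IsArtinian B (B ⧸ I) := isArtinian_of_pow_smul_top_eq_bot m k (B ⧸ I) hsmul
  exact isArtinian_of_tower B this

end ArtinianAux

section PIT

/-- The key local case of Krull's principal ideal theorem, in the form we need:
in a Noetherian local domain, if every prime containing `x` is the maximal ideal,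
then there is no prime strictly between `⊥` and the maximal ideal. -/
private lemma pit_local {B : Type u} [CommRing B] [IsLocalRing B] [IsDomain B]
    [IsNoetherianRing B] {x : B} (hxmem : x ∈ IsLocalRing.maximalIdeal B)
    (hxm : ∀ P : Ideal B, P.IsPrime → x ∈ P → P = IsLocalRing.maximalIdeal B)
    {r : Ideal B} (hr : r.IsPrime) (hrbot : r ≠ ⊥)
    (hrm : r < IsLocalRing.maximalIdeal B) : False := by
  haveI := hr
  have hxr : x ∉ r := fun hx => (hrm.ne (hxm r hr hx)).elim
  -- the radical of (x) is the maximal ideal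
  have hrad : (Ideal.span {x}).radical = IsLocalRing.maximalIdeal B := by
    rw [Ideal.radical_eq_sInf]
    have hset : {J : Ideal B | Ideal.span {x} ≤ J ∧ J.IsPrime} =
        {IsLocalRing.maximalIdeal B} := by
      ext J
      simp only [Set.mem_setOf_eq, Set.mem_singleton_iff]
      constructor
      · rintro ⟨hle, hJ⟩
        exact hxm J hJ (hle (Ideal.subset_span rfl))
      · rintro rfl
        exact ⟨(Ideal.span_singleton_le_iff_mem _).mpr hxmem,
          (IsLocalRing.maximalIdeal.isMaximal B).isPrime⟩
    rw [hset, sInf_singleton]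
  obtain ⟨k, hk⟩ := Ideal.exists_radical_pow_le_of_fg (Ideal.span {x})
    (IsNoetherian.noetherian _)
  rw [hrad] at hk
  -- B ⧸ (x) is Artinian
  haveI hart : IsArtinianRing (B ⧸ Ideal.span {x}) := isArtinianRing_quotient_of_pow_le hk
  -- symbolic powers of r
  have hle : r.primeCompl ≤ nonZeroDivisors B := by
    intro s hs
    exact mem_nonZeroDivisors_of_ne_zero (fun h0 => hs (h0 ▸ r.zero_mem))
  haveI : IsDomain (Localization.AtPrime r) := IsLocalization.isDomain_localization hle
  haveI : IsNoetherianRing (Localization.AtPrime r) :=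
    IsLocalization.isNoetherianRing r.primeCompl _ inferInstance
  set φ := algebraMap B (Localization.AtPrime r) with hφ
  have hinj : Function.Injective φ := IsLocalization.injective (Localization.AtPrime r) hle
  set r' : Ideal (Localization.AtPrime r) := r.map φ with hr'
  set J : ℕ → Ideal B := fun n => (r' ^ n).comap φ with hJ
  have hJanti : ∀ {a b : ℕ}, a ≤ b → J b ≤ J a := by
    intro a b hab
    exact Ideal.comap_mono (Ideal.pow_le_pow_right hab)
  -- the chain of images of J n in the Artinian ring B ⧸ (x) stabilizes
  set g : ℕ → Ideal (B ⧸ Ideal.span {x}) :=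
    fun n => (J n).map (Ideal.Quotient.mk (Ideal.span {x})) with hg
  obtain ⟨n, hn⟩ := IsArtinian.monotone_stabilizes
    (R := B ⧸ Ideal.span {x}) (M := B ⧸ Ideal.span {x})
    ⟨fun n => OrderDual.toDual (g n), fun a b hab => Ideal.map_mono (hJanti hab)⟩
  have hgn : g n = g (n + 1) := hn (n + 1) (Nat.le_succ n)
  -- deduce J n ≤ J (n+1) ⊔ m • J n
  have hstep : J n ≤ J (n + 1) ⊔ (IsLocalRing.maximalIdeal B) • (J n) := by
    intro y hy
    have hy' : Ideal.Quotient.mk (Ideal.span {x}) y ∈ g (n + 1) := by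
      rw [← hgn]
      exact Ideal.mem_map_of_mem _ hy
    obtain ⟨z, hz, hzy⟩ :=
      (Ideal.mem_map_iff_of_surjective _ Ideal.Quotient.mk_surjective).mp hy'
    have hyz : y - z ∈ Ideal.span {x} := by
      have h0 : Ideal.Quotient.mk (Ideal.span {x}) (y - z) = 0 := by
        rw [map_sub, hzy, sub_self]
      exact (Ideal.Quotient.eq_zero_iff_mem).mp h0
    obtain ⟨t, ht⟩ := Ideal.mem_span_singleton'.mp hyz
    -- t * x ∈ J n, and since x is invertible in the localization, t ∈ J n
    have htx : t * x ∈ J n := by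
      rw [ht]
      exact Submodule.sub_mem _ hy (hJanti (Nat.le_succ n) hz)
    have htJ : t ∈ J n := by
      have hu : IsUnit (φ x) := IsLocalization.map_units (M := r.primeCompl) (Localization.AtPrime r) ⟨x, hxr⟩
      obtain ⟨u, hu⟩ := hu
      have h1 : φ (t * x) ∈ r' ^ n := htx
      have h2 : φ t = φ (t * x) * ↑u⁻¹ := by
        rw [_root_.map_mul, ← hu, mul_assoc, Units.mul_inv, mul_one]
      show φ t ∈ r' ^ n
      rw [h2]
      exact Ideal.mul_mem_right _ _ h1
    have hy2 : y = z + x * t := by linear_combination -ht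
    rw [hy2]
    exact Submodule.add_mem _ (Submodule.mem_sup_left hz)
      (Submodule.mem_sup_right (Submodule.smul_mem_smul hxmem htJ))
  -- Nakayama: J n = J (n+1)
  have hJeq : J n = J (n + 1) := by
    refine le_antisymm ?_ (hJanti (Nat.le_succ n))
    refine Submodule.le_of_le_smul_of_le_jacobson_bot (IsNoetherian.noetherian _) ?_ hstep
    rw [IsLocalRing.jacobson_eq_maximalIdeal (⊥ : Ideal B) bot_ne_top]
  -- push forward: r'^n = r'^(n+1), Nakayama again in the localization
  have hCeq : r' ^ n = r' ^ (n + 1) := by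
    have h1 := IsLocalization.map_comap r.primeCompl (Localization.AtPrime r) (r' ^ n)
    have h2 := IsLocalization.map_comap r.primeCompl (Localization.AtPrime r) (r' ^ (n + 1))
    rw [← h1, ← h2]
    show (J n).map φ = (J (n + 1)).map φ
    rw [hJeq]
  have hr'prime : r'.IsPrime :=
    IsLocalization.isPrime_of_isPrime_disjoint r.primeCompl (Localization.AtPrime r) r hr
      (Set.disjoint_left.mpr fun a ha ha2 => ha ha2)
  have hbot : r' ^ n = ⊥ := by
    rw [eq_bot_iff]
    refine Submodule.le_of_le_smul_of_le_jacobson_bot (I := r') (N := ⊥)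
      (IsNoetherian.noetherian _) ?_ ?_
    · rw [IsLocalRing.jacobson_eq_maximalIdeal (⊥ : Ideal (Localization.AtPrime r)) bot_ne_top]
      exact IsLocalRing.le_maximalIdeal hr'prime.ne_top
    · rw [bot_sup_eq, smul_eq_mul, ← pow_succ']
      exact le_of_eq hCeq
  obtain ⟨t, htr, ht0⟩ := Submodule.exists_mem_ne_zero_of_ne_bot hrbot
  have hfin : (φ t) ^ n ∈ r' ^ n := Ideal.pow_mem_pow (Ideal.mem_map_of_mem φ htr) n
  rw [hbot, Submodule.mem_bot] at hfin
  exact pow_ne_zero n (fun h0 => ht0 (hinj (by rw [h0, map_zero]))) hfin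

/-- Krull's principal ideal theorem for domains (the case we need): a minimal prime over a
principal ideal cannot strictly contain a nonzero prime. -/
private lemma pit_domain {A : Type u} [CommRing A] [IsDomain A] [IsNoetherianRing A]
    {x : A} {q₁ q₂ : Ideal A} (hq₁ : q₁ ∈ (Ideal.span {x}).minimalPrimes)
    (hq₂ : q₂.IsPrime) (h2bot : q₂ ≠ ⊥) (hlt : q₂ < q₁) : False := by
  haveI hq₁p : q₁.IsPrime := hq₁.1.1
  have hxq₁ : x ∈ q₁ := hq₁.1.2 (Ideal.subset_span rfl)
  have hle : q₁.primeCompl ≤ nonZeroDivisors A := by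
    intro s hs
    exact mem_nonZeroDivisors_of_ne_zero (fun h0 => hs (h0 ▸ q₁.zero_mem))
  haveI : IsDomain (Localization.AtPrime q₁) := IsLocalization.isDomain_localization hle
  haveI : IsNoetherianRing (Localization.AtPrime q₁) :=
    IsLocalization.isNoetherianRing q₁.primeCompl _ inferInstance
  set φ := algebraMap A (Localization.AtPrime q₁) with hφ
  have hinj : Function.Injective φ := IsLocalization.injective (Localization.AtPrime q₁) hle
  have hcomap : (IsLocalRing.maximalIdeal (Localization.AtPrime q₁)).comap φ = q₁ :=
    Localization.AtPrime.comap_maximalIdeal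
  have hxm : φ x ∈ IsLocalRing.maximalIdeal (Localization.AtPrime q₁) := by
    have : x ∈ (IsLocalRing.maximalIdeal (Localization.AtPrime q₁)).comap φ := by
      rw [hcomap]; exact hxq₁
    exact this
  have hprime : ∀ P : Ideal (Localization.AtPrime q₁), P.IsPrime → φ x ∈ P →
      P = IsLocalRing.maximalIdeal (Localization.AtPrime q₁) := by
    intro P hP hxP
    have hPc : (P.comap φ).IsPrime := hP.comap φ
    have hPle : P.comap φ ≤ q₁ :=
      le_trans (Ideal.comap_mono (IsLocalRing.le_maximalIdeal hP.ne_top)) (le_of_eq hcomap)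
    have hq₁le : q₁ ≤ P.comap φ := hq₁.2
      ⟨hPc, (Ideal.span_singleton_le_iff_mem _).mpr hxP⟩ hPle
    have hPeq : P.comap φ = q₁ := le_antisymm hPle hq₁le
    calc P = (P.comap φ).map φ := (IsLocalization.map_comap q₁.primeCompl _ P).symm
    _ = ((IsLocalRing.maximalIdeal (Localization.AtPrime q₁)).comap φ).map φ := by
        rw [hPeq, hcomap]
    _ = IsLocalRing.maximalIdeal (Localization.AtPrime q₁) :=
        IsLocalization.map_comap q₁.primeCompl _ _
  have hdisj : Disjoint (q₁.primeCompl : Set A) (q₂ : Set A) :=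
    Set.disjoint_left.mpr fun a ha ha2 => ha (hlt.le ha2)
  have hrprime : (q₂.map φ).IsPrime :=
    IsLocalization.isPrime_of_isPrime_disjoint q₁.primeCompl _ q₂ hq₂ hdisj
  have hrcomap : (q₂.map φ).comap φ = q₂ :=
    IsLocalization.comap_map_of_isPrime_disjoint q₁.primeCompl _ hq₂ hdisj
  have hrbot : q₂.map φ ≠ ⊥ := by
    obtain ⟨t, htq, ht0⟩ := Submodule.exists_mem_ne_zero_of_ne_bot h2bot
    intro h0
    have hm : φ t ∈ q₂.map φ := Ideal.mem_map_of_mem φ htq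
    rw [h0, Submodule.mem_bot] at hm
    exact ht0 (hinj (by rw [hm, map_zero]))
  have hrm : q₂.map φ < IsLocalRing.maximalIdeal (Localization.AtPrime q₁) := by
    refine lt_of_le_of_ne (IsLocalRing.le_maximalIdeal hrprime.ne_top) ?_
    intro h0
    exact hlt.ne (by rw [← hrcomap, h0, hcomap])
  exact pit_local hxm hprime hrprime hrbot hrm

end PIT

/-- if a Noetherian integral domain has infinitely many primes,
then for any nonzero `a` the set of primes not containing `a` is infinite. -/
theorem infinite_primes_not_containing
    (A : Type*) [CommRing A] [IsDomain A] [IsNoetherianRing A]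
    [Infinite (PrimeSpectrum A)] (a : A) (ha : a ≠ 0) :
    {p : PrimeSpectrum A | a ∉ p.asIdeal}.Infinite := by
  classical
  by_contra hinf
  rw [Set.not_infinite] at hinf
  -- choose a nonzero element in each nonzero prime avoiding `a`
  have hchoice : ∀ p : PrimeSpectrum A, ∃ y : A, y ≠ 0 ∧ (p.asIdeal ≠ ⊥ → y ∈ p.asIdeal) := by
    intro p
    by_cases hp : p.asIdeal = ⊥
    · exact ⟨1, one_ne_zero, fun h => absurd hp h⟩
    · obtain ⟨y, hy1, hy2⟩ := Submodule.exists_mem_ne_zero_of_ne_bot hp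
      exact ⟨y, hy2, fun _ => hy1⟩
  choose f hf0 hfmem using hchoice
  set c : A := ∏ p ∈ hinf.toFinset, f p with hc
  have hc0 : c ≠ 0 := Finset.prod_ne_zero_iff.mpr fun p _ => hf0 p
  set d : A := a * c with hd
  have hd0 : d ≠ 0 := mul_ne_zero ha hc0
  have hdmem : ∀ P : Ideal A, P.IsPrime → P ≠ ⊥ → d ∈ P := by
    intro P hP hPbot
    by_cases haP : a ∈ P
    · exact P.mul_mem_right c haP
    · have hpS : (⟨P, hP⟩ : PrimeSpectrum A) ∈ hinf.toFinset := by
        rw [Set.Finite.mem_toFinset]; exact haP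
      have hfc : f ⟨P, hP⟩ ∣ c := Finset.dvd_prod_of_mem f hpS
      obtain ⟨k, hk⟩ := hfc
      have hcP : c ∈ P := by
        rw [hk]
        exact P.mul_mem_right k (hfmem ⟨P, hP⟩ hPbot)
      exact P.mul_mem_left a hcP
  -- the minimal primes of (d)
  have hQfin : (Ideal.span {d} : Ideal A).minimalPrimes.Finite := by
    rw [Ideal.minimalPrimes_eq_comap]
    exact (minimalPrimes.finite_of_isNoetherianRing _).image _
  have hQne : ∀ q ∈ (Ideal.span {d} : Ideal A).minimalPrimes, q ≠ ⊥ := by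
    intro q hq h0
    have hdq : d ∈ q := hq.1.2 (Ideal.subset_span rfl)
    rw [h0, Submodule.mem_bot] at hdq
    exact hd0 hdq
  -- find a prime P₀ outside Q ∪ {⊥}
  have hinjas : Function.Injective (PrimeSpectrum.asIdeal (R := A)) :=
    fun p q h => PrimeSpectrum.ext h
  have hbadfin : ({p : PrimeSpectrum A | p.asIdeal ∈ (Ideal.span {d} : Ideal A).minimalPrimes} ∪
      {p : PrimeSpectrum A | p.asIdeal = ⊥}).Finite := by
    refine Set.Finite.union ?_ ?_
    · exact Set.Finite.preimage hinjas.injOn hQfin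
    · exact Set.Finite.preimage hinjas.injOn (Set.finite_singleton ⊥)
  obtain ⟨p₀, hp₀⟩ := (hbadfin.infinite_compl).nonempty
  simp only [Set.mem_compl_iff, Set.mem_union, Set.mem_setOf_eq, not_or] at hp₀
  obtain ⟨hp₀Q, hp₀bot⟩ := hp₀
  haveI hP₀prime : p₀.asIdeal.IsPrime := p₀.isPrime
  obtain ⟨q₀, hq₀Q, hq₀le⟩ := Ideal.exists_minimalPrimes_le
    ((Ideal.span_singleton_le_iff_mem _).mpr (hdmem p₀.asIdeal hP₀prime hp₀bot))
  -- prime avoidance: find x ∈ P₀ outside all q ∈ Q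
  have hnotsub : ¬ ((p₀.asIdeal : Set A) ⊆
      ⋃ q ∈ (hQfin.toFinset : Set (Ideal A)), (q : Set A)) := by
    intro hsub
    obtain ⟨q, hqmem, hle⟩ := (Ideal.subset_union_prime (f := id) ⊥ ⊥
      (fun i hi _ _ => by
        rw [Set.Finite.mem_toFinset] at hi
        exact hi.1.1)).mp hsub
    rw [Set.Finite.mem_toFinset] at hqmem
    -- P₀ ≤ q; but also q₀ ∈ Q is below P₀, so q ≤ q₀ ≤ P₀ ≤ q and P₀ = q ∈ Q
    have h1 : q ≤ q₀ := hqmem.2 hq₀Q.1 (le_trans hq₀le hle)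
    have h2 : p₀.asIdeal = q := le_antisymm hle (le_trans h1 hq₀le)
    exact hp₀Q (h2 ▸ hqmem)
  obtain ⟨x, hxP₀, hxQ⟩ := Set.not_subset.mp hnotsub
  have hxnotin : ∀ q ∈ (Ideal.span {d} : Ideal A).minimalPrimes, x ∉ q := by
    intro q hq hxq
    exact hxQ (Set.mem_biUnion (by rwa [Finset.mem_coe, Set.Finite.mem_toFinset]) hxq)
  have hx0 : x ≠ 0 := by
    intro h0
    exact hxnotin q₀ hq₀Q (h0 ▸ q₀.zero_mem)
  -- take a minimal prime q₁ over (x) inside P₀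
  obtain ⟨q₁, hq₁min, hq₁le⟩ := Ideal.exists_minimalPrimes_le
    ((Ideal.span_singleton_le_iff_mem p₀.asIdeal).mpr hxP₀)
  haveI hq₁prime : q₁.IsPrime := hq₁min.1.1
  have hxq₁ : x ∈ q₁ := hq₁min.1.2 (Ideal.subset_span rfl)
  have hq₁bot : q₁ ≠ ⊥ := fun h0 => hx0 (by rw [h0] at hxq₁; exact hxq₁)
  -- q₁ contains d, hence contains some q₂ ∈ Q
  obtain ⟨q₂, hq₂Q, hq₂le⟩ := Ideal.exists_minimalPrimes_le
    ((Ideal.span_singleton_le_iff_mem _).mpr (hdmem q₁ hq₁prime hq₁bot))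
  have hq₂lt : q₂ < q₁ := lt_of_le_of_ne hq₂le (fun h => hxnotin q₂ hq₂Q (h ▸ hxq₁))
  exact pit_domain hq₁min hq₂Q.1.1 (hQne q₂ hq₂Q) hq₂lt
end
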